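/- Let Φ be an m×N complex matrix with unit-norm columns and coherence μ > 0. Let S index a linearly independent family of s columns, let T be a set of t column indices, and let δ = |S ∩ T|. Assume s − δ − 1 ≥ 1 and t < (s − δ − 1)·( √( (1 + 1/(s−δ−1)) · μ⁻²/(s−δ−1) + 1/4 ) − 1 ). Then for every probability measure ν on ℂ^S absolutely continuous with respect to Lebesgue measure, ν{ x ∈ ℂ^S : Φ_S x ∈ range(Φ_T) } = 0. -/

import Mathlib

/-!
If `range Φ_S ⊆ range Φ_T`, the `s - δ + t` columns indexed by `S ∪ T` span a space of dimension
at most `t`. Their Gram matrix `G` is Hermitian with unit diagonal and off-diagonal entries of norm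
at most `μ`, and Cauchy–Schwarz on its nonzero eigenvalues gives `(tr G)² ≤ rank G · ‖G‖_F²`, i.e.
`M ≤ rank G · (1 + (M - 1) μ²)` for `M` columns. The hypothesis on `t` is exactly what makes this
impossible, so `{x | Φ_S x ∈ range Φ_T}` is a proper complex subspace of `ℂ^S`, hence Lebesgue-null.
-/

noncomputable section

open Matrix MeasureTheory Finset

namespace SparsityGap

variable {m N : ℕ}

/-- The `j`-th column of the dictionary `Φ`. -/
def col (Φ : Matrix (Fin m) (Fin N) ℂ) (j : Fin N) : Fin m → ℂ := fun i => Φ i j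

/-- The column submatrix `Φ_S` of `Φ` with columns listed in `S`. -/
def sub (Φ : Matrix (Fin m) (Fin N) ℂ) (S : Finset (Fin N)) :
    Matrix (Fin m) {j // j ∈ S} ℂ :=
  Φ.submatrix id (fun j => (j : Fin N))

/-- `range (Φ_S)`: the span of the columns of `Φ` indexed by `S`. -/
def colSpan (Φ : Matrix (Fin m) (Fin N) ℂ) (S : Finset (Fin N)) :
    Submodule ℂ (Fin m → ℂ) :=
  Submodule.span ℂ (Set.range fun j : {j // j ∈ S} => col Φ j)

/-- `S` indexes a linearly independent family of columns of `Φ`. -/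
def LinIndepOn (Φ : Matrix (Fin m) (Fin N) ℂ) (S : Finset (Fin N)) : Prop :=
  LinearIndependent ℂ (fun j : {j // j ∈ S} => col Φ j)

/-- Each column of `Φ` has unit Euclidean norm. -/
def UnitColumns (Φ : Matrix (Fin m) (Fin N) ℂ) : Prop :=
  ∀ j, ∑ i, ‖Φ i j‖ ^ 2 = 1

/-- The coherence of `Φ` (the maximal inner product between distinct columns)
is at most `μ`. -/
def CoherenceLE (Φ : Matrix (Fin m) (Fin N) ℂ) (μ : ℝ) : Prop :=
  ∀ j k, j ≠ k → ‖∑ i, star (Φ i j) * Φ i k‖ ≤ μ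

/-- The ℓ₂ → ℓ₂ operator (spectral) norm of a matrix. -/
def opNorm {α β : Type*} [Fintype α] [Fintype β] [DecidableEq β]
    (A : Matrix α β ℂ) : ℝ :=
  ‖LinearMap.toContinuousLinearMap (Matrix.toEuclideanLin A)‖

/-- The Euclidean norm of a finitely supported vector. -/
def enorm {α : Type*} [Fintype α] (w : α → ℂ) : ℝ :=
  Real.sqrt (∑ j, ‖w j‖ ^ 2)

end SparsityGap

namespace Matrix

variable {𝕜 n : Type*} [RCLike 𝕜] [Fintype n]

theorem sum_norm_sq_le_card_mul {A : Matrix n n 𝕜} {μ : ℝ} (hdiag : ∀ i, ‖A i i‖ ≤ 1)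
    (hoff : ∀ i j, i ≠ j → ‖A i j‖ ≤ μ) :
    ∑ i, ∑ j, ‖A i j‖ ^ 2 ≤ Fintype.card n * (1 + (Fintype.card n - 1) * μ ^ 2) := by
  classical
  have hrow : ∀ i, ∑ j, ‖A i j‖ ^ 2 ≤ 1 + (Fintype.card n - 1) * μ ^ 2 := by
    intro i
    have hdiag_sq : ‖A i i‖ ^ 2 ≤ 1 := pow_le_one₀ (norm_nonneg _) (hdiag i)
    have hoff_sq : ∑ j ∈ univ.erase i, ‖A i j‖ ^ 2 ≤ (Fintype.card n - 1) * μ ^ 2 :=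
      calc ∑ j ∈ univ.erase i, ‖A i j‖ ^ 2 ≤ ∑ _j ∈ univ.erase i, μ ^ 2 :=
            sum_le_sum fun j hj ↦
              pow_le_pow_left₀ (norm_nonneg _) (hoff i j (ne_of_mem_erase hj).symm) 2
        _ = (Fintype.card n - 1) * μ ^ 2 := by
            rw [sum_const, card_erase_of_mem (mem_univ i), card_univ, nsmul_eq_mul,
              Nat.cast_pred (Fintype.card_pos_iff.mpr ⟨i⟩)]
    rw [← add_sum_erase _ _ (mem_univ i)]
    linarith
  calc ∑ i, ∑ j, ‖A i j‖ ^ 2 ≤ ∑ _i : n, (1 + (Fintype.card n - 1) * μ ^ 2) :=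
        sum_le_sum fun i _ ↦ hrow i
    _ = Fintype.card n * (1 + (Fintype.card n - 1) * μ ^ 2) := by
        rw [sum_const, card_univ, nsmul_eq_mul]

variable [DecidableEq n] {A : Matrix n n 𝕜}

theorem IsHermitian.trace_mul_self_eq_sum_eigenvalues_sq (hA : A.IsHermitian) :
    (A * A).trace = ∑ i, (hA.eigenvalues i : 𝕜) ^ 2 := by
  set D : Matrix n n 𝕜 := diagonal (RCLike.ofReal ∘ hA.eigenvalues)
  have hAA : A * A = Unitary.conjStarAlgAut 𝕜 _ hA.eigenvectorUnitary (D * D) := by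
    rw [map_mul, ← hA.spectral_theorem]
  rw [hAA, Unitary.conjStarAlgAut_apply, trace_mul_cycle, Unitary.coe_star_mul_self, one_mul,
    diagonal_mul_diagonal, trace_diagonal]
  simp [sq]

theorem IsHermitian.sum_eigenvalues_sq_eq_sum_norm_sq (hA : A.IsHermitian) :
    ∑ i, hA.eigenvalues i ^ 2 = ∑ i, ∑ j, ‖A i j‖ ^ 2 := by
  apply RCLike.ofReal_injective (K := 𝕜)
  push_cast
  rw [← hA.trace_mul_self_eq_sum_eigenvalues_sq, trace]
  simp only [diag_apply, mul_apply]
  refine sum_congr rfl fun i _ ↦ sum_congr rfl fun j _ ↦ ?_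
  rw [← hA.apply j i, RCLike.star_def, RCLike.mul_conj]

theorem IsHermitian.sq_sum_eigenvalues_le_rank_mul (hA : A.IsHermitian) :
    (∑ i, hA.eigenvalues i) ^ 2 ≤ A.rank * ∑ i, hA.eigenvalues i ^ 2 := by
  set P := univ.filter fun i ↦ hA.eigenvalues i ≠ 0
  have hrank : A.rank = #P := by rw [hA.rank_eq_card_non_zero_eigs, Fintype.card_subtype]
  calc (∑ i, hA.eigenvalues i) ^ 2 = (∑ i ∈ P, hA.eigenvalues i) ^ 2 := by
        rw [sum_filter_ne_zero]
    _ ≤ #P * ∑ i ∈ P, hA.eigenvalues i ^ 2 := sq_sum_le_card_mul_sum_sq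
    _ ≤ A.rank * ∑ i, hA.eigenvalues i ^ 2 := by
        rw [hrank]
        gcongr
        exact subset_univ P

theorem IsHermitian.card_le_rank_mul_of_diag_eq_one (hA : A.IsHermitian) {μ : ℝ}
    (hdiag : ∀ i, A i i = 1) (hoff : ∀ i j, i ≠ j → ‖A i j‖ ≤ μ) :
    (Fintype.card n : ℝ) ≤ A.rank * (1 + (Fintype.card n - 1) * μ ^ 2) := by
  set M := Fintype.card n
  rcases Nat.eq_zero_or_pos M with hM | hM
  · have : A.rank = 0 := Nat.eq_zero_of_le_zero (hM ▸ A.rank_le_card_width)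
    simp [hM, this]
  have htrace : ∑ i, hA.eigenvalues i = M := by
    apply RCLike.ofReal_injective (K := 𝕜)
    push_cast
    rw [← hA.trace_eq_sum_eigenvalues]
    simp [trace, hdiag, M]
  have hfrob := sum_norm_sq_le_card_mul (fun i ↦ (hdiag i ▸ norm_one).le) hoff
  have hCS := hA.sq_sum_eigenvalues_le_rank_mul
  rw [htrace, hA.sum_eigenvalues_sq_eq_sum_norm_sq] at hCS
  refine le_of_mul_le_mul_left ?_ (by exact_mod_cast hM : (0 : ℝ) < M)
  calc (M : ℝ) * M = M ^ 2 := (sq _).symm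
    _ ≤ A.rank * (M * (1 + (M - 1) * μ ^ 2)) := hCS.trans (by gcongr)
    _ = M * (A.rank * (1 + (M - 1) * μ ^ 2)) := by ring

end Matrix

namespace SparsityGap

theorem mul_add_mul_sq_lt_of_lt_mul_sqrt {a t μ : ℝ} (ha : 0 < a) (ht₀ : 0 ≤ t) (hμ : 0 < μ)
    (ht : t < a * (Real.sqrt ((1 + 1 / a) * ((1 / μ ^ 2) / a) + 1 / 4) - 1)) :
    t * (t + a) * μ ^ 2 < a + 1 := by
  set X := (1 + 1 / a) * ((1 / μ ^ 2) / a) + 1 / 4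
  have hX : a ^ 2 * X = (a + 1) / μ ^ 2 + a ^ 2 / 4 := by
    simp only [X]; field_simp
  have hlt : t + a / 2 < a * Real.sqrt X := by linarith
  have hsq : (t + a / 2) ^ 2 < a ^ 2 * X := by
    calc (t + a / 2) ^ 2 < (a * Real.sqrt X) ^ 2 := by gcongr
      _ = a ^ 2 * X := by rw [mul_pow, Real.sq_sqrt (by positivity)]
  have : t * (t + a) < (a + 1) / μ ^ 2 := by nlinarith
  rwa [lt_div_iff₀ (by positivity)] at this

theorem addHaar_complexSubmodule {E : Type*} [NormedAddCommGroup E] [NormedSpace ℂ E]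
    [MeasurableSpace E] [BorelSpace E] [FiniteDimensional ℂ E] (μ : Measure E)
    [μ.IsAddHaarMeasure] {W : Submodule ℂ E} (hW : W ≠ ⊤) : μ W = 0 :=
  Measure.addHaar_submodule μ (W.restrictScalars ℝ)
    (by rwa [Ne, Submodule.restrictScalars_eq_top_iff])

variable {m N : ℕ} (Φ : Matrix (Fin m) (Fin N) ℂ)

theorem range_mulVecLin_sub (S : Finset (Fin N)) :
    LinearMap.range (sub Φ S).mulVecLin = colSpan Φ S := by
  rw [range_mulVecLin]; rfl

theorem rank_sub_eq_finrank_colSpan (S : Finset (Fin N)) :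
    (sub Φ S).rank = Module.finrank ℂ (colSpan Φ S) := by
  rw [Matrix.rank, range_mulVecLin_sub]

theorem colSpan_eq_span_image (S : Finset (Fin N)) :
    colSpan Φ S = Submodule.span ℂ (col Φ '' S) := by
  rw [colSpan, Set.image_eq_range]; rfl

theorem colSpan_union (S T : Finset (Fin N)) :
    colSpan Φ (S ∪ T) = colSpan Φ S ⊔ colSpan Φ T := by
  simp only [colSpan_eq_span_image, coe_union, Set.image_union, Submodule.span_union]

theorem rank_sub_union_le_card {S T : Finset (Fin N)} (h : colSpan Φ S ≤ colSpan Φ T) :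
    (sub Φ (S ∪ T)).rank ≤ #T := by
  rw [rank_sub_eq_finrank_colSpan, colSpan_union, sup_eq_right.mpr h]
  exact (finrank_range_le_card _).trans_eq (Fintype.card_coe T)

theorem conjTranspose_sub_mul_sub_apply (S : Finset (Fin N)) (j k : {j // j ∈ S}) :
    ((sub Φ S)ᴴ * sub Φ S) j k = ∑ i, star (Φ i j) * Φ i k := by
  simp [sub, mul_apply]

variable {Φ}

open scoped ComplexOrder in
theorem card_le_rank_sub_mul {μ : ℝ} (hcol : UnitColumns Φ) (hcoh : CoherenceLE Φ μ)
    (U : Finset (Fin N)) : (#U : ℝ) ≤ (sub Φ U).rank * (1 + (#U - 1) * μ ^ 2) := by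
  have hG := (isHermitian_conjTranspose_mul_self (sub Φ U)).card_le_rank_mul_of_diag_eq_one
    (μ := μ) (fun j ↦ ?_) (fun j k hjk ↦ ?_)
  · simpa [rank_conjTranspose_mul_self] using hG
  · simp_rw [conjTranspose_sub_mul_sub_apply, RCLike.star_def, RCLike.conj_mul]
    norm_cast
    simp [hcol j]
  · rw [conjTranspose_sub_mul_sub_apply]
    exact hcoh j k (Subtype.coe_injective.ne hjk)

theorem sparsity_gap_reverted_general {m N : ℕ}
    (Φ : Matrix (Fin m) (Fin N) ℂ) (μ : ℝ) (hμ : 0 < μ)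
    (hcol : UnitColumns Φ) (hcoh : CoherenceLE Φ μ)
    (S T : Finset (Fin N))
    (hsδ : (1 : ℝ) ≤ (S.card : ℝ) - ((S ∩ T).card : ℝ) - 1)
    (ht : (T.card : ℝ) <
      ((S.card : ℝ) - ((S ∩ T).card : ℝ) - 1) *
        (Real.sqrt
          ((1 + 1 / ((S.card : ℝ) - ((S ∩ T).card : ℝ) - 1)) *
              ((1 / μ ^ 2) / ((S.card : ℝ) - ((S ∩ T).card : ℝ) - 1)) +
            1 / 4) - 1))
    (ν : Measure ({j // j ∈ S} → ℂ))
    (hac : ν ≪ volume) :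
    ν {x | (sub Φ S).mulVec x ∈ colSpan Φ T} = 0 := by
  set W := (colSpan Φ T).comap (sub Φ S).mulVecLin
  suffices hW : W ≠ ⊤ from hac (addHaar_complexSubmodule volume hW)
  intro hW
  have hST : colSpan Φ S ≤ colSpan Φ T := by
    rw [← range_mulVecLin_sub, LinearMap.range_le_iff_comap]
    exact hW
  set a : ℝ := #S - #(S ∩ T) - 1 with ha
  have hunion : (#(S ∪ T) : ℝ) = a + 1 + #T := by
    have : (#(S ∪ T) : ℝ) + #(S ∩ T) = #S + #T := by
      exact_mod_cast card_union_add_card_inter S T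
    linarith
  have hgap : #T * (#T + a) * μ ^ 2 < a + 1 :=
    mul_add_mul_sq_lt_of_lt_mul_sqrt (by linarith) (Nat.cast_nonneg _) hμ ht
  have hcover : a + 1 + #T ≤ #T * (1 + (a + #T) * μ ^ 2) :=
    calc a + 1 + #T = #(S ∪ T) := hunion.symm
      _ ≤ (sub Φ (S ∪ T)).rank * (1 + (#(S ∪ T) - 1) * μ ^ 2) :=
        card_le_rank_sub_mul hcol hcoh (S ∪ T)
      _ ≤ #T * (1 + (#(S ∪ T) - 1) * μ ^ 2) := by
        gcongr
        · rw [hunion]; nlinarith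
        · exact_mod_cast rank_sub_union_le_card Φ hST
      _ = #T * (1 + (a + #T) * μ ^ 2) := by rw [hunion]; ring
  linarith

/-- Corollary 12.  Let `Φ` have unit-norm columns and
coherence at most `μ > 0`.  Let `S` index a linearly independent family of
`s` columns, let `T` be a set of `t` columns, and let `δ = |S ∩ T|`.  If
`s − δ − 1 ≥ 1` and
`t < (s − δ − 1)·(√((1 + 1/(s−δ−1))·μ⁻²/(s−δ−1) + 1/4) − 1)`, then a generic
signal in `range(Φ_S)` almost surely cannot be represented using the columns
in `T`. -/
theorem sparsity_gap_reverted {m N : ℕ}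
    (Φ : Matrix (Fin m) (Fin N) ℂ) (μ : ℝ) (hμ : 0 < μ)
    (hcol : UnitColumns Φ) (hcoh : CoherenceLE Φ μ)
    (S T : Finset (Fin N)) (hS : LinIndepOn Φ S)
    (hsδ : (1 : ℝ) ≤ (S.card : ℝ) - ((S ∩ T).card : ℝ) - 1)
    (ht : (T.card : ℝ) <
      ((S.card : ℝ) - ((S ∩ T).card : ℝ) - 1) *
        (Real.sqrt
          ((1 + 1 / ((S.card : ℝ) - ((S ∩ T).card : ℝ) - 1)) *
              ((1 / μ ^ 2) / ((S.card : ℝ) - ((S ∩ T).card : ℝ) - 1)) +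
            1 / 4) - 1))
    (ν : Measure ({j // j ∈ S} → ℂ)) (hν : IsProbabilityMeasure ν)
    (hac : ν ≪ volume) :
    ν {x | (sub Φ S).mulVec x ∈ colSpan Φ T} = 0 :=
  sparsity_gap_reverted_general Φ μ hμ hcol hcoh S T hsδ ht ν hac

end SparsityGap
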